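/- Let A = (A₁ →^0 A₀, m², m³) be a skeletal 2-term strongly homotopy associative conformal algebra. Then (A₀, m²) is an associative conformal algebra, m² makes A₁ an A₀-bimodule, and m³ is a 3-cocycle in the Hochschild complex of A₀ with coefficients in A₁, i.e., d₃(m³) = 0. -/

import Mathlib

structure AssocConformalAlg (k : Type*) [Field k] (A : Type*) [AddCommGroup A] [Module k A] where
  D : A →ₗ[k] A
  mul : k → A →ₗ[k] A →ₗ[k] A
  conf_left : ∀ (l : k) (a b : A), mul l (D a) b = -(l • mul l a b)
  conf_right : ∀ (l : k) (a b : A), mul l a (D b) = D (mul l a b) + l • mul l a b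
  assoc : ∀ (l m : k) (a b c : A), mul (l + m) (mul l a b) c = mul l a (mul m b c)

structure ConfBimodule {k : Type*} [Field k] {A : Type*} [AddCommGroup A] [Module k A]
    (S : AssocConformalAlg k A) (M : Type*) [AddCommGroup M] [Module k M] where
  DM : M →ₗ[k] M
  lact : k → A →ₗ[k] M →ₗ[k] M
  ract : k → M →ₗ[k] A →ₗ[k] M
  lact_D : ∀ (l : k) (a : A) (v : M), lact l (S.D a) v = -(l • lact l a v)
  lact_DM : ∀ (l : k) (a : A) (v : M), lact l a (DM v) = DM (lact l a v) + l • lact l a v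
  lact_mul : ∀ (l m : k) (a b : A) (v : M),
      lact (l + m) (S.mul l a b) v = lact l a (lact m b v)
  ract_DM : ∀ (l : k) (v : M) (a : A), ract l (DM v) a = -(l • ract l v a)
  ract_D : ∀ (l : k) (v : M) (a : A), ract l v (S.D a) = DM (ract l v a) + l • ract l v a
  ract_mul : ∀ (l m : k) (v : M) (a b : A),
      ract (l + m) (ract l v a) b = ract l v (S.mul m a b)
  compat : ∀ (l m : k) (a : A) (v : M) (b : A),
      ract (l + m) (lact l a v) b = lact l a (ract m v b)

structure TwoTermSHAC (k : Type*) [Field k] (A0 A1 : Type*)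
    [AddCommGroup A0] [Module k A0] [AddCommGroup A1] [Module k A1] where
  D0 : A0 →ₗ[k] A0
  D1 : A1 →ₗ[k] A1
  d : A1 →ₗ[k] A0
  d_comm : ∀ b, d (D1 b) = D0 (d b)
  m00 : k → A0 →ₗ[k] A0 →ₗ[k] A0
  m01 : k → A0 →ₗ[k] A1 →ₗ[k] A1
  m10 : k → A1 →ₗ[k] A0 →ₗ[k] A1
  m3 : k → k → A0 →ₗ[k] A0 →ₗ[k] A0 →ₗ[k] A1
  m00_D_left : ∀ l a b, m00 l (D0 a) b = -(l • m00 l a b)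
  m00_D_right : ∀ l a b, m00 l a (D0 b) = D0 (m00 l a b) + l • m00 l a b
  m01_D_left : ∀ l a b, m01 l (D0 a) b = -(l • m01 l a b)
  m01_D_right : ∀ l a b, m01 l a (D1 b) = D1 (m01 l a b) + l • m01 l a b
  m10_D_left : ∀ l b a, m10 l (D1 b) a = -(l • m10 l b a)
  m10_D_right : ∀ l b a, m10 l b (D0 a) = D1 (m10 l b a) + l • m10 l b a
  m3_D1 : ∀ l1 l2 a b c, m3 l1 l2 (D0 a) b c = -(l1 • m3 l1 l2 a b c)
  m3_D2 : ∀ l1 l2 a b c, m3 l1 l2 a (D0 b) c = -(l2 • m3 l1 l2 a b c)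
  m3_D3 : ∀ l1 l2 a b c, m3 l1 l2 a b (D0 c) = D1 (m3 l1 l2 a b c) + (l1 + l2) • m3 l1 l2 a b c
  eq1 : ∀ l a b, d (m01 l a b) = m00 l a (d b)
  eq2 : ∀ l b a, d (m10 l b a) = m00 l (d b) a
  eq3 : ∀ l b1 b2, m01 l (d b1) b2 = m10 l b1 (d b2)
  eq4 : ∀ l1 l2 a1 a2 a3, d (m3 l1 l2 a1 a2 a3)
      = m00 (l1 + l2) (m00 l1 a1 a2) a3 - m00 l1 a1 (m00 l2 a2 a3)
  eq5 : ∀ l1 l2 b a2 a3, m3 l1 l2 (d b) a2 a3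
      = m10 (l1 + l2) (m10 l1 b a2) a3 - m10 l1 b (m00 l2 a2 a3)
  eq6 : ∀ l1 l2 a1 b a3, m3 l1 l2 a1 (d b) a3
      = m10 (l1 + l2) (m01 l1 a1 b) a3 - m01 l1 a1 (m10 l2 b a3)
  eq7 : ∀ l1 l2 a1 a2 b, m3 l1 l2 a1 a2 (d b)
      = m01 (l1 + l2) (m00 l1 a1 a2) b - m01 l1 a1 (m01 l2 a2 b)
  eq8 : ∀ l1 l2 l3 a1 a2 a3 a4,
      m10 (l1 + l2 + l3) (m3 l1 l2 a1 a2 a3) a4 + m01 l1 a1 (m3 l2 l3 a2 a3 a4)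
      = m3 (l1 + l2) l3 (m00 l1 a1 a2) a3 a4 - m3 l1 (l2 + l3) a1 (m00 l2 a2 a3) a4
        + m3 l1 l2 a1 a2 (m00 l3 a3 a4)

/-! When `𝔡 = 0`, the left-hand side of each of the identities `eq4`–`eq7` vanishes, and what
remains is associativity of `m²` on `A₀` and the three bimodule axioms for `A₁`. The pentagon
identity `eq8`, rearranged, is the Hochschild cocycle condition `d₃(m³) = 0`. -/

namespace TwoTermSHAC

variable {k : Type*} [Field k] {A0 A1 : Type*} [AddCommGroup A0] [Module k A0]
  [AddCommGroup A1] [Module k A1] (S : TwoTermSHAC k A0 A1)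

theorem m00_assoc_of_d_eq_zero (hd : S.d = 0) (l m : k) (a b c : A0) :
    S.m00 (l + m) (S.m00 l a b) c = S.m00 l a (S.m00 m b c) := by
  have h := S.eq4 l m a b c
  rw [hd, LinearMap.zero_apply] at h
  exact sub_eq_zero.mp h.symm

theorem m01_assoc_of_d_eq_zero (hd : S.d = 0) (l m : k) (a b : A0) (v : A1) :
    S.m01 (l + m) (S.m00 l a b) v = S.m01 l a (S.m01 m b v) := by
  have h := S.eq7 l m a b v
  rw [hd, LinearMap.zero_apply, map_zero] at h
  exact sub_eq_zero.mp h.symm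

theorem m10_assoc_of_d_eq_zero (hd : S.d = 0) (l m : k) (v : A1) (a b : A0) :
    S.m10 (l + m) (S.m10 l v a) b = S.m10 l v (S.m00 m a b) := by
  have h := S.eq5 l m v a b
  rw [hd, LinearMap.zero_apply, map_zero, LinearMap.zero_apply] at h
  exact sub_eq_zero.mp h.symm

theorem m10_m01_comm_of_d_eq_zero (hd : S.d = 0) (l m : k) (a : A0) (v : A1) (b : A0) :
    S.m10 (l + m) (S.m01 l a v) b = S.m01 l a (S.m10 m v b) := by
  have h := S.eq6 l m a v b
  rw [hd, LinearMap.zero_apply, map_zero, LinearMap.zero_apply] at h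
  exact sub_eq_zero.mp h.symm

theorem hochschild_d3_m3_eq_zero (l1 l2 l3 : k) (a1 a2 a3 a4 : A0) :
    S.m01 l1 a1 (S.m3 l2 l3 a2 a3 a4)
      - S.m3 (l1 + l2) l3 (S.m00 l1 a1 a2) a3 a4
      + S.m3 l1 (l2 + l3) a1 (S.m00 l2 a2 a3) a4
      - S.m3 l1 l2 a1 a2 (S.m00 l3 a3 a4)
      + S.m10 (l1 + l2 + l3) (S.m3 l1 l2 a1 a2 a3) a4 = 0 := by
  linear_combination (norm := abel) S.eq8 l1 l2 l3 a1 a2 a3 a4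

def toAssocConformalAlg (hd : S.d = 0) : AssocConformalAlg k A0 where
  D := S.D0
  mul := S.m00
  conf_left := S.m00_D_left
  conf_right := S.m00_D_right
  assoc := S.m00_assoc_of_d_eq_zero hd

def toConfBimodule (hd : S.d = 0) : ConfBimodule (S.toAssocConformalAlg hd) A1 where
  DM := S.D1
  lact := S.m01
  ract := S.m10
  lact_D := S.m01_D_left
  lact_DM := S.m01_D_right
  lact_mul := S.m01_assoc_of_d_eq_zero hd
  ract_DM := S.m10_D_left
  ract_D := S.m10_D_right
  ract_mul := S.m10_assoc_of_d_eq_zero hd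
  compat := S.m10_m01_comm_of_d_eq_zero hd

end TwoTermSHAC

theorem stmt_5 (k : Type*) [Field k]
    (A0 A1 : Type*) [AddCommGroup A0] [Module k A0] [AddCommGroup A1] [Module k A1]
    (S : TwoTermSHAC k A0 A1) (hsk : S.d = 0) :
    ∃ T : AssocConformalAlg k A0,
      T.D = S.D0 ∧ (∀ l a b, T.mul l a b = S.m00 l a b) ∧
      ∃ Mb : ConfBimodule T A1,
        Mb.DM = S.D1 ∧ (∀ l a v, Mb.lact l a v = S.m01 l a v) ∧
        (∀ l v a, Mb.ract l v a = S.m10 l v a) ∧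
        (∀ (l1 l2 l3 : k) (a1 a2 a3 a4 : A0),
          S.m01 l1 a1 (S.m3 l2 l3 a2 a3 a4)
            - S.m3 (l1 + l2) l3 (S.m00 l1 a1 a2) a3 a4
            + S.m3 l1 (l2 + l3) a1 (S.m00 l2 a2 a3) a4
            - S.m3 l1 l2 a1 a2 (S.m00 l3 a3 a4)
            + S.m10 (l1 + l2 + l3) (S.m3 l1 l2 a1 a2 a3) a4 = 0) :=
  ⟨S.toAssocConformalAlg hsk, rfl, fun _ _ _ => rfl,
    S.toConfBimodule hsk, rfl, fun _ _ _ => rfl, fun _ _ _ => rfl, S.hochschild_d3_m3_eq_zero⟩
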